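/- arXiv:2107.09137 — 2 statements merged into one kernel-verified Lean document; each statement's English description precedes it below -/
import Mathlib

section
/- Let W11 e1 = λ1 e1 with λ1 > 0, and suppose the operator norm of W22 is strictly less than λ1. Then as m → ∞, the vector (1/λ1^m) * W21^(m) e1 converges to the sum of the convergent series Σ_{k=0}^∞ (1/λ1) * (W22/λ1)^k * (W21 e1). -/
/-! Induction gives the bottom-left block of `(fromBlocks A 0 C D) ^ k` as
`∑_{i<k} D ^ i * C * A ^ (k - 1 - i)`. Applied to an eigenvector `e` of `A` for `μ` and divided by
`μ ^ k`, it becomes the `k`-th partial sum of the Neumann-type series `∑ μ⁻¹ (μ⁻¹ D) ^ i (C e)`,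
which converges because `‖μ⁻¹ D‖ < 1` in the complete normed ring of matrices. -/

open Matrix Finset Filter Topology

attribute [local instance] Matrix.linftyOpNormedAddCommGroup Matrix.linftyOpNormedRing
attribute [local instance] Matrix.linftyOpNormSMulClass

variable {ι m n R : Type*}

theorem Summable.matrix_mulVec [TopologicalSpace R] [NonUnitalNonAssocSemiring R]
    [IsTopologicalSemiring R] [Fintype n] {f : ι → Matrix m n R} (hf : Summable f) (v : n → R) :
    Summable fun i => f i *ᵥ v :=
  hf.map (mulVec.addMonoidHomLeft v) (continuous_id.matrix_mulVec continuous_const)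

namespace Matrix

theorem fromBlocks_zero₁₂_pow [Fintype m] [Fintype n] [DecidableEq m] [DecidableEq n] [Semiring R]
    (A : Matrix m m R) (C : Matrix n m R) (D : Matrix n n R) (k : ℕ) :
    fromBlocks A 0 C D ^ k =
      fromBlocks (A ^ k) 0 (∑ i ∈ range k, D ^ i * C * A ^ (k - 1 - i)) (D ^ k) := by
  induction k with
  | zero => simp [fromBlocks_one]
  | succ k ih =>
    have hshift : ∀ i ∈ range k, D ^ i * C * A ^ (k - 1 - i) * A = D ^ i * C * A ^ (k - i) := by
      intro i hi
      rw [Matrix.mul_assoc, ← pow_succ, show k - 1 - i + 1 = k - i by grind]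
    rw [pow_succ, ih, fromBlocks_multiply]
    simp [sum_range_succ, Matrix.sum_mul, sum_congr rfl hshift, pow_succ]

theorem pow_mulVec_of_mulVec_eq_smul [Fintype m] [DecidableEq m] [CommSemiring R]
    {A : Matrix m m R} {e : m → R} {μ : R} (h : A *ᵥ e = μ • e) (k : ℕ) :
    (A ^ k) *ᵥ e = μ ^ k • e := by
  induction k with
  | zero => simp
  | succ k ih => rw [pow_succ, ← mulVec_mulVec, h, mulVec_smul, ih, smul_smul, pow_succ']

theorem summable_pow_of_linfty_opNorm_lt_one [Fintype n] [DecidableEq n] [NormedRing R]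
    [CompleteSpace R] {X : Matrix n n R} (hX : ‖X‖ < 1) : Summable (X ^ ·) :=
  -- instance search does not identify the uniformity of the `L∞` operator norm with the product one
  have := @instHasSummableGeomSeriesOfCompleteSpace (Matrix n n R) _
    (inferInstanceAs (CompleteSpace (n → n → R)))
  summable_geometric_of_norm_lt_one hX

theorem toBlocks₂₁_fromBlocks_zero₁₂_pow_mulVec_of_mulVec_eq_smul [Fintype m] [Fintype n]
    [DecidableEq m] [DecidableEq n] [Field R] {A : Matrix m m R} (C : Matrix n m R)
    (D : Matrix n n R) {e : m → R} {μ : R} (h : A *ᵥ e = μ • e) (hμ : μ ≠ 0) (k : ℕ) :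
    (μ ^ k)⁻¹ • (toBlocks₂₁ (fromBlocks A 0 C D ^ k) *ᵥ e) =
      ∑ i ∈ range k, (μ⁻¹ • (μ⁻¹ • D) ^ i) *ᵥ (C *ᵥ e) := by
  rw [fromBlocks_zero₁₂_pow, toBlocks_fromBlocks₂₁, sum_mulVec, smul_sum]
  refine sum_congr rfl fun i hi => ?_
  have hscale : (μ ^ k)⁻¹ * μ ^ (k - 1 - i) = μ⁻¹ ^ (i + 1) := by
    obtain ⟨j, rfl⟩ := Nat.exists_eq_add_of_lt (mem_range.1 hi)
    rw [show i + j + 1 - 1 - i = j by omega, inv_pow]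
    field_simp
    ring
  rw [← mulVec_mulVec, pow_mulVec_of_mulVec_eq_smul h, mulVec_smul, smul_smul, hscale, smul_pow,
    smul_smul, smul_mulVec, ← mulVec_mulVec, ← pow_succ']

end Matrix

/-- Convergence of the normalized bottom-left block applied to the dominant eigenvector. -/
theorem stmt_3 {n1 n2 : ℕ} (W11 : Matrix (Fin n1) (Fin n1) ℝ)
    (W22 : Matrix (Fin n2) (Fin n2) ℝ) (W21 : Matrix (Fin n2) (Fin n1) ℝ)
    (e1 : Fin n1 → ℝ) (lam1 : ℝ) (hpos : 0 < lam1)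
    (heig : W11.mulVec e1 = lam1 • e1) (hnorm : ‖W22‖ < lam1) :
    Tendsto
      (fun m : ℕ =>
        (1 / lam1 ^ m) • (Matrix.toBlocks₂₁ ((Matrix.fromBlocks W11 0 W21 W22) ^ m)).mulVec e1)
      atTop
      (𝓝 (∑' k : ℕ, ((1 / lam1) • ((1 / lam1) • W22) ^ k).mulVec (W21.mulVec e1))) := by
  have hcontr : ‖lam1⁻¹ • W22‖ < 1 := by
    rw [norm_smul, norm_inv, Real.norm_of_nonneg hpos.le, inv_mul_lt_one₀ hpos]
    exact hnorm
  have hsum : Summable fun k => (lam1⁻¹ • (lam1⁻¹ • W22) ^ k) *ᵥ (W21 *ᵥ e1) :=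
    ((summable_pow_of_linfty_opNorm_lt_one hcontr).const_smul lam1⁻¹).matrix_mulVec _
  simp only [one_div, toBlocks₂₁_fromBlocks_zero₁₂_pow_mulVec_of_mulVec_eq_smul W21 W22 heig
    hpos.ne']
  exact hsum.hasSum.tendsto_sum_nat
end

section
/- For the block lower triangular matrix M = [[W11,0],[W21,W22]] with W11 e1 = λ1 e1, λ1 > ‖W22‖, λ1 > 0: the limit of (M/λ1)^m applied to the concatenated vector (e1, e2) exists for any e2, and equals (e1', r) where the top block is e1 (since W11^m e1/λ1^m = e1) and the bottom block is r = Σ_{k=0}^∞ λ1^{-(k+1)} W22^k W21 e1. -/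
open Matrix Filter Topology

attribute [local instance] Matrix.linftyOpNormedAddCommGroup Matrix.linftyOpNormedRing

/-!
Since `λ1⁻¹ • W11` fixes `e1`, the powers of `λ1⁻¹ • M` keep the top block `e1` and act on the
bottom block as the iterates of the affine map `z ↦ λ1⁻¹ • W21 e1 + (λ1⁻¹ • W22) z`. As
`‖λ1⁻¹ • W22‖ < 1`, the `m`-th iterate, a partial Neumann sum plus `(λ1⁻¹ • W22)^m e2`, converges
to the full Neumann sum.
-/

namespace Matrix

variable {l n : Type*} [Fintype l] [Fintype n]

theorem fromBlocks_zero₁₂_mulVec_sumElim {α : Type*} [NonUnitalNonAssocSemiring α]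
    {A : Matrix l l α} {C : Matrix n l α} (D : Matrix n n α) {x : l → α} (hx : A *ᵥ x = x)
    (y : n → α) :
    fromBlocks A 0 C D *ᵥ Sum.elim x y = Sum.elim x (C *ᵥ x + D *ᵥ y) := by
  rw [fromBlocks_mulVec, Sum.elim_comp_inl, Sum.elim_comp_inr, hx, zero_mulVec, add_zero]

theorem fromBlocks_zero₁₂_pow_mulVec_sumElim {α : Type*} [Semiring α] [DecidableEq l]
    [DecidableEq n] {A : Matrix l l α} {C : Matrix n l α} (D : Matrix n n α) {x : l → α}
    (hx : A *ᵥ x = x) (y : n → α) (m : ℕ) :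
    fromBlocks A 0 C D ^ m *ᵥ Sum.elim x y = Sum.elim x ((fun z ↦ C *ᵥ x + D *ᵥ z)^[m] y) := by
  induction m with
  | zero => simp
  | succ m ih =>
    rw [pow_succ', ← mulVec_mulVec, ih, fromBlocks_zero₁₂_mulVec_sumElim D hx,
      Function.iterate_succ_apply']

variable [DecidableEq n]

theorem iterate_add_mulVec_eq_sum {α : Type*} [Semiring α] (N : Matrix n n α) (b y : n → α)
    (m : ℕ) :
    (fun z ↦ b + N *ᵥ z)^[m] y = ∑ k ∈ Finset.range m, N ^ k *ᵥ b + N ^ m *ᵥ y := by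
  induction m with
  | zero => simp
  | succ m ih =>
    rw [Function.iterate_succ_apply', ih, mulVec_add, mulVec_sum, Finset.sum_range_succ']
    simp only [pow_succ', ← mulVec_mulVec, pow_zero, one_mulVec]
    abel

theorem tendsto_iterate_add_mulVec {𝕜 : Type*} [RCLike 𝕜] {N : Matrix n n 𝕜} (hN : ‖N‖ < 1)
    (b y : n → 𝕜) :
    Tendsto (fun m ↦ (fun z ↦ b + N *ᵥ z)^[m] y) atTop (𝓝 (∑' k, N ^ k *ᵥ b)) := by
  let _ : NormedSpace 𝕜 (Matrix n n 𝕜) := Matrix.linftyOpNormedSpace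
  -- instance search misses completeness: the two uniformities agree only up to unfolding
  have : HasSummableGeomSeries (Matrix n n 𝕜) :=
    @instHasSummableGeomSeriesOfCompleteSpace _ _ (FiniteDimensional.complete 𝕜 _)
  have hsum : HasSum (fun k ↦ N ^ k *ᵥ b) ((∑' k, N ^ k) *ᵥ b) :=
    (summable_geometric_of_norm_lt_one hN).hasSum.map (mulVec.addMonoidHomLeft b)
      (continuous_id.matrix_mulVec continuous_const)
  have hpow : Tendsto (fun m ↦ N ^ m *ᵥ y) atTop (𝓝 0) := by
    simpa [Function.comp_def] using
      ((continuous_id.matrix_mulVec continuous_const).tendsto 0).comp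
        (tendsto_pow_atTop_nhds_zero_of_norm_lt_one hN)
  simp only [iterate_add_mulVec_eq_sum]
  simpa [hsum.tsum_eq] using hsum.tendsto_sum_nat.add hpow

end Matrix

/-- `(M/λ1)^m (e1, e2)` converges to `(e1, r)` with `r` the Neumann series sum. -/
theorem stmt_19 {n1 n2 : ℕ} (W11 : Matrix (Fin n1) (Fin n1) ℝ)
    (W22 : Matrix (Fin n2) (Fin n2) ℝ) (W21 : Matrix (Fin n2) (Fin n1) ℝ)
    (e1 : Fin n1 → ℝ) (e2 : Fin n2 → ℝ) (lam1 : ℝ) (hpos : 0 < lam1)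
    (heig : W11.mulVec e1 = lam1 • e1) (hnorm : ‖W22‖ < lam1) :
    Tendsto
      (fun m : ℕ => ((lam1⁻¹ • Matrix.fromBlocks W11 0 W21 W22) ^ m).mulVec (Sum.elim e1 e2))
      atTop
      (𝓝 (Sum.elim e1 (∑' k : ℕ, lam1⁻¹ ^ (k + 1) • (W22 ^ k).mulVec (W21.mulVec e1)))) := by
  have hfixed : (lam1⁻¹ • W11) *ᵥ e1 = e1 := by
    rw [smul_mulVec, heig, smul_smul, inv_mul_cancel₀ hpos.ne', one_smul]
  have hcontract : ‖lam1⁻¹ • W22‖ < 1 := by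
    have := Matrix.linftyOpNormSMulClass (R := ℝ) (m := Fin n2) (n := Fin n2) (α := ℝ)
    rw [norm_smul, norm_inv, Real.norm_of_nonneg hpos.le, inv_mul_lt_one₀ hpos]
    exact hnorm
  have hterm (k : ℕ) : (lam1⁻¹ • W22) ^ k *ᵥ ((lam1⁻¹ • W21) *ᵥ e1) =
      lam1⁻¹ ^ (k + 1) • (W22 ^ k).mulVec (W21.mulVec e1) := by
    rw [smul_pow, smul_mulVec, smul_mulVec, mulVec_smul, smul_smul, pow_succ]
  have hcont : Continuous (Sum.elim e1 : (Fin n2 → ℝ) → Fin n1 ⊕ Fin n2 → ℝ) :=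
    continuous_pi (Sum.forall.2 ⟨fun _ ↦ continuous_const, continuous_apply⟩)
  simp_rw [fromBlocks_smul, smul_zero, fromBlocks_zero₁₂_pow_mulVec_sumElim _ hfixed, ← hterm]
  exact hcont.tendsto _ |>.comp (tendsto_iterate_add_mulVec hcontract _ e2)
end
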